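/- arXiv:math/0602029 — 3 statements merged into one kernel-verified Lean document; each statement's English description precedes it below -/
import Mathlib

section
/- Let X ⊂ ℝ^ν be a Lipschitz neighborhood retract (i.e. there is an open set U ⊇ X and a Lipschitz map p : U → X with p(x) = x for all x ∈ X). If Y ⊂ ℝ^ν is bi-Lipschitz homeomorphic to X, then Y is also a Lipschitz neighborhood retract. -/
open Metric Set

/-- **Lemma (LNR).** If `X ⊆ ℝ^ν` is a Lipschitz neighborhood retract (there is an open
`U ⊇ X` and a Lipschitz retraction `p : U → X` fixing `X` pointwise) and `Y ⊆ ℝ^ν` is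
bi-Lipschitz homeomorphic to `X`, then `Y` is a Lipschitz neighborhood retract as well. -/
theorem stmt_1 (ν : ℕ) (X Y : Set (EuclideanSpace ℝ (Fin ν)))
    (U : Set (EuclideanSpace ℝ (Fin ν))) (hU : IsOpen U) (hXU : X ⊆ U)
    (p : EuclideanSpace ℝ (Fin ν) → EuclideanSpace ℝ (Fin ν)) (K : NNReal)
    (hp : LipschitzOnWith K p U) (hpX : p '' U ⊆ X) (hpid : ∀ x ∈ X, p x = x)
    -- a bi-Lipschitz homeomorphism `f : Y → X` with Lipschitz inverse `g`
    (f g : EuclideanSpace ℝ (Fin ν) → EuclideanSpace ℝ (Fin ν)) (Lf Lg : NNReal)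
    (hf : LipschitzOnWith Lf f Y) (hg : LipschitzOnWith Lg g X)
    (hfY : f '' Y = X) (hgf : ∀ y ∈ Y, g (f y) = y) (hfg : ∀ x ∈ X, f (g x) = x) :
    ∃ (V : Set (EuclideanSpace ℝ (Fin ν)))
      (q : EuclideanSpace ℝ (Fin ν) → EuclideanSpace ℝ (Fin ν)) (K' : NNReal),
      IsOpen V ∧ Y ⊆ V ∧ LipschitzOnWith K' q V ∧ q '' V ⊆ Y ∧ ∀ y ∈ Y, q y = y := by
  -- extend `f` to a Lipschitz map `F` on all of `ℝ^ν`
  set e : EuclideanSpace ℝ (Fin ν) ≃L[ℝ] (Fin ν → ℝ) :=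
    (EuclideanSpace.equiv (Fin ν) ℝ)
  have hf' : LipschitzOnWith (‖(e : EuclideanSpace ℝ (Fin ν) →L[ℝ] (Fin ν → ℝ))‖₊ * Lf)
      (fun y => e (f y)) Y :=
    ((e : EuclideanSpace ℝ (Fin ν) →L[ℝ] (Fin ν → ℝ)).lipschitz).comp_lipschitzOnWith hf
  obtain ⟨F', hF', hEq⟩ := hf'.extend_pi
  set F : EuclideanSpace ℝ (Fin ν) → EuclideanSpace ℝ (Fin ν) := fun x => e.symm (F' x)
  have hFlip : LipschitzWith (‖(e.symm : (Fin ν → ℝ) →L[ℝ] EuclideanSpace ℝ (Fin ν))‖₊ *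
      (‖(e : EuclideanSpace ℝ (Fin ν) →L[ℝ] (Fin ν → ℝ))‖₊ * Lf)) F :=
    ((e.symm : (Fin ν → ℝ) →L[ℝ] EuclideanSpace ℝ (Fin ν)).lipschitz).comp hF'
  have hFY : ∀ y ∈ Y, F y = f y := by
    intro y hy
    have := hEq hy
    simp only [F]
    rw [← this]
    simp
  refine ⟨F ⁻¹' U, g ∘ p ∘ F,
    Lg * (K * (‖(e.symm : (Fin ν → ℝ) →L[ℝ] EuclideanSpace ℝ (Fin ν))‖₊ *
      (‖(e : EuclideanSpace ℝ (Fin ν) →L[ℝ] (Fin ν → ℝ))‖₊ * Lf))),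
    hU.preimage hFlip.continuous, ?_, ?_, ?_, ?_⟩
  · intro y hy
    simp only [mem_preimage, hFY y hy]
    exact hXU (hfY ▸ mem_image_of_mem f hy)
  · exact hg.comp (hp.comp hFlip.lipschitzOnWith (fun x hx => hx))
      (fun x hx => hpX (mem_image_of_mem p hx))
  · rintro x ⟨v, hv, rfl⟩
    have hx : p (F v) ∈ X := hpX (mem_image_of_mem p hv)
    obtain ⟨y, hy, hfy⟩ := (hfY ▸ hx : p (F v) ∈ f '' Y)
    simpa [Function.comp, ← hfy, hgf y hy] using hy
  · intro y hy
    have hfyX : f y ∈ X := hfY ▸ mem_image_of_mem f hy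
    simp [Function.comp, hFY y hy, hpid _ hfyX, hgf y hy]
end

section
/- There exists a compactly supported Lipschitz function φ : ℝ² → ℝ such that for every 1 ≤ p < ∞ the composition operator Φ(u) = φ∘u from W^{1,p}([0,1], ℝ²) to W^{1,p}([0,1]) is not continuous: there are curves u_i → u in W^{1,p}([0,1], ℝ²) with Φ(u_i) not converging to Φ(u) in W^{1,p}. -/
/-!
`φ` is the distance to a comb. In the strip `[a_j, a_{j+1}] × ℝ`, `a_j = 2 - 2^{1-j}`, the comb
has horizontal teeth at the heights `2^{-j} ℤ`, and it contains the line `x = 2` on which the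
strips accumulate. On the midline of strip `j`, `φ` is the distance to `2^{-j} ℤ`, a sawtooth of
slope `±1`, while `φ` vanishes on the line `x = 2`. The midlines are translates of one another and
converge to `x = 2` in `W^{1,p}`, but the derivatives of their compositions with `φ` stay at
distance `1` in `L^p`.
-/

open Set MeasureTheory Filter Metric Topology
open scoped ENNReal

noncomputable section

variable {E : Type*} [NormedAddCommGroup E] [NormedSpace ℝ E]

/-- The `W^{1,p}(μ)` distance, with the pointwise derivative (`deriv` is `0` where a function is not
differentiable, so this is the Sobolev distance only for absolutely continuous functions). -/
def sobolevDist (p : ℝ≥0∞) (μ : Measure ℝ) (f g : ℝ → E) : ℝ≥0∞ :=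
  eLpNorm (fun x => f x - g x) p μ + eLpNorm (fun x => deriv f x - deriv g x) p μ

theorem tendsto_sobolevDist_const_add (γ : ℝ → E) {c : ℕ → E} {c₀ : E}
    (hc : Tendsto c atTop (𝓝 c₀)) (p : ℝ≥0∞) (μ : Measure ℝ) [IsFiniteMeasure μ] :
    Tendsto (fun i => sobolevDist p μ (fun t => c i + γ t) (fun t => c₀ + γ t)) atTop (𝓝 0) := by
  simp only [sobolevDist, add_sub_add_right_eq_sub, deriv_const_add, sub_self,
    eLpNorm_zero', add_zero]
  have hbound (i : ℕ) : eLpNorm (fun _ : ℝ => c i - c₀) p μ ≤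
      μ univ ^ p.toReal⁻¹ * ENNReal.ofReal ‖c i - c₀‖ :=
    eLpNorm_le_of_ae_bound (ae_of_all _ fun _ => le_rfl)
  have hlim : Tendsto (fun i => μ univ ^ p.toReal⁻¹ * ENNReal.ofReal ‖c i - c₀‖) atTop (𝓝 0) := by
    simpa using ENNReal.Tendsto.const_mul
      (ENNReal.tendsto_ofReal (tendsto_iff_norm_sub_tendsto_zero.1 hc))
      (Or.inr (ENNReal.rpow_ne_top_of_nonneg (by positivity) (measure_ne_top μ univ)))
  exact tendsto_of_tendsto_of_tendsto_of_le_of_le tendsto_const_nhds hlim (fun _ => zero_le) hbound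

theorem one_le_sobolevDist {μ : Measure ℝ} [IsProbabilityMeasure μ] {p : ℝ≥0∞} (hp : p ≠ 0)
    {f g : ℝ → E} (h : ∀ᵐ x ∂μ, ‖deriv f x - deriv g x‖ = 1) : 1 ≤ sobolevDist p μ f g := by
  have hderiv : eLpNorm (fun x => deriv f x - deriv g x) p μ = 1 := by
    rw [eLpNorm_congr_norm_ae (g := fun _ => (1 : ℝ)) (by simpa using h),
      eLpNorm_const _ hp (IsProbabilityMeasure.ne_zero μ)]
    simp
  exact hderiv ▸ le_add_self

namespace AddCircle

variable {h : ℝ}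

theorem coe_sub_intCast_mul (t : ℝ) (k : ℤ) : ((t - k * h : ℝ) : AddCircle h) = t := by
  simp [coe_period]

theorem norm_coe_le_abs_sub_intCast_mul (t : ℝ) (k : ℤ) :
    ‖(t : AddCircle h)‖ ≤ |t - k * h| := by
  rw [← coe_sub_intCast_mul t k]
  exact QuotientAddGroup.norm_mk_le_norm

theorem norm_coe_eq_abs_sub_intCast_mul (hh : 0 < h) {t : ℝ} {k : ℤ} (hk : |t - k * h| ≤ h / 2) :
    ‖(t : AddCircle h)‖ = |t - k * h| := by
  rwa [← coe_sub_intCast_mul t k, norm_coe_eq_abs_iff _ hh.ne', abs_of_pos hh]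

theorem abs_deriv_norm_coe (hh : 0 < h) {t : ℝ} (ht : ∀ k : ℤ, t ≠ k * (h / 2)) :
    |deriv (fun s : ℝ => ‖(s : AddCircle h)‖) t| = 1 := by
  set k := round (h⁻¹ * t)
  have hne : t - k * h ≠ 0 := fun h0 => ht (2 * k) (by push_cast; linarith)
  have hlt : |t - k * h| < h / 2 := by
    refine lt_of_le_of_ne ?_ fun heq => ?_
    · have := norm_le_half_period h hh.ne' (x := t)
      rwa [norm_eq, abs_of_pos hh] at this
    · rcases (abs_eq (by positivity)).1 heq with h1 | h1
      · exact ht (2 * k + 1) (by push_cast; linarith)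
      · exact ht (2 * k - 1) (by push_cast; linarith)
  have hloc : (fun s : ℝ => ‖(s : AddCircle h)‖) =ᶠ[𝓝 t] fun s => |s - k * h| := by
    filter_upwards [(continuous_id.sub continuous_const).abs.continuousAt.eventually_lt
      continuousAt_const hlt] with s hs
    exact norm_coe_eq_abs_sub_intCast_mul hh hs.le
  rw [hloc.deriv_eq, deriv_comp_sub_const, deriv_abs]
  rcases hne.lt_or_gt with hneg | hpos
  · simp [sign_neg hneg]
  · simp [sign_pos hpos]

theorem ae_abs_deriv_norm_coe (hh : 0 < h) :
    ∀ᵐ t, |deriv (fun s : ℝ => ‖(s : AddCircle h)‖) t| = 1 := by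
  filter_upwards [(countable_range fun k : ℤ => k * (h / 2)).ae_notMem volume] with t ht
  exact abs_deriv_norm_coe hh fun k hk => ht ⟨k, hk.symm⟩

end AddCircle

theorem half_sub_le_abs_sub_midpoint {α : Type*} [Field α] [LinearOrder α] [IsStrictOrderedRing α]
    {a b x : α} (hx : x ∉ Ioo a b) : (b - a) / 2 ≤ |x - (a + b) / 2| := by
  rw [mem_Ioo, not_and_or, not_lt, not_lt] at hx
  rw [le_abs]
  rcases hx with hx | hx
  · right; linarith
  · left; linarith

def combWidth (j : ℕ) : ℝ := 2⁻¹ ^ j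

def combEdge (j : ℕ) : ℝ := 2 - 2 * combWidth j

def combMid (j : ℕ) : ℝ := (combEdge j + combEdge (j + 1)) / 2

/-- Besides the teeth, the comb contains everything outside the box `(0, 2) × (-2, 2)`, so that
`infDist · comb` has compact support. -/
def comb : Set (EuclideanSpace ℝ (Fin 2)) :=
  {z | z 0 ∉ Ioo 0 2 ∨ 2 ≤ |z 1| ∨
    ∃ (j : ℕ) (k : ℤ), z 0 ∈ Icc (combEdge j) (combEdge (j + 1)) ∧ z 1 = k * combWidth j}

theorem combWidth_pos (j : ℕ) : 0 < combWidth j := by unfold combWidth; positivity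

theorem combWidth_le_one (j : ℕ) : combWidth j ≤ 1 := pow_le_one₀ (by norm_num) (by norm_num)

theorem combEdge_succ (j : ℕ) : combEdge (j + 1) = combEdge j + combWidth j := by
  simp only [combEdge, combWidth, pow_succ]; ring

theorem combEdge_mono : Monotone combEdge := fun _ _ hjk => by
  have : combWidth _ ≤ combWidth _ := pow_le_pow_of_le_one (by norm_num) (by norm_num) hjk
  simp only [combEdge]; linarith

theorem combEdge_nonneg (j : ℕ) : 0 ≤ combEdge j := by
  have := combWidth_le_one j; simp only [combEdge]; linarith

theorem combEdge_le_two (j : ℕ) : combEdge j ≤ 2 := by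
  have := combWidth_pos j; simp only [combEdge]; linarith

theorem tendsto_combMid : Tendsto combMid atTop (𝓝 2) := by
  have hwidth : Tendsto combWidth atTop (𝓝 0) :=
    tendsto_pow_atTop_nhds_zero_of_lt_one (by norm_num) (by norm_num)
  have hedge : Tendsto combEdge atTop (𝓝 2) := by
    have := (hwidth.const_mul 2).const_sub 2
    rwa [mul_zero, sub_zero] at this
  have := (hedge.add (hedge.comp (tendsto_add_atTop_nat 1))).div_const 2
  rwa [show ((2 : ℝ) + 2) / 2 = 2 by norm_num] at this

theorem exists_eq_intCast_mul_of_mem_comb {i : ℕ} {y : EuclideanSpace ℝ (Fin 2)} (hy : y ∈ comb)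
    (hstrip : y 0 ∈ Ioo (combEdge i) (combEdge (i + 1))) :
    2 ≤ |y 1| ∨ ∃ k : ℤ, y 1 = k * combWidth i := by
  obtain ⟨hleft, hright⟩ := hstrip
  rcases hy with hy | hy | ⟨j, k, ⟨hj, hj'⟩, hk⟩
  · exact absurd ⟨(combEdge_nonneg i).trans_lt hleft, hright.trans_le (combEdge_le_two _)⟩ hy
  · exact Or.inl hy
  · obtain hji | rfl | hij := lt_trichotomy j i
    · linarith [combEdge_mono (Nat.succ_le_of_lt hji)]
    · exact Or.inr ⟨k, hk⟩
    · linarith [combEdge_mono (Nat.succ_le_of_lt hij)]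

theorem hasCompactSupport_infDist_comb : HasCompactSupport (infDist · comb) := by
  refine HasCompactSupport.intro (isCompact_closedBall (0 : EuclideanSpace ℝ (Fin 2)) 4)
    fun z hz => infDist_zero_of_mem ?_
  by_contra hzc
  simp only [comb, mem_ofPred_eq, not_or, not_not, not_le] at hzc
  obtain ⟨⟨h0, h0'⟩, h1, -⟩ := hzc
  apply hz
  rw [mem_closedBall_zero_iff, EuclideanSpace.norm_eq, Fin.sum_univ_two,
    Real.sqrt_le_left (by norm_num)]
  simp only [Real.norm_eq_abs, sq_abs]
  nlinarith [sq_abs (z 1), abs_nonneg (z 1)]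

def verticalLine (x t : ℝ) : EuclideanSpace ℝ (Fin 2) :=
  x • EuclideanSpace.single 0 1 + t • EuclideanSpace.single 1 1

@[simp] theorem verticalLine_apply_zero (x t : ℝ) : verticalLine x t 0 = x := by
  simp [verticalLine]

@[simp] theorem verticalLine_apply_one (x t : ℝ) : verticalLine x t 1 = t := by
  simp [verticalLine]

theorem isometry_verticalLine (x : ℝ) : Isometry (verticalLine x) := by
  refine Isometry.of_dist_eq fun s t => ?_
  rw [EuclideanSpace.dist_eq, Fin.sum_univ_two]
  simp [Real.sqrt_sq dist_nonneg]

theorem infDist_verticalLine_comb {i : ℕ} {t : ℝ} (ht : t ∈ Icc 0 1) :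
    infDist (verticalLine (combMid i) t) comb = ‖(t : AddCircle (combWidth i))‖ := by
  have hw := combWidth_pos i
  set z := verticalLine (combMid i) t
  set k := round ((combWidth i)⁻¹ * t)
  have htooth : verticalLine (combMid i) (k * combWidth i) ∈ comb := by
    refine Or.inr (Or.inr ⟨i, k, ?_, by simp⟩)
    simp only [verticalLine_apply_zero, combMid, combEdge_succ, mem_Icc]
    constructor <;> linarith
  have hcoord (y : EuclideanSpace ℝ (Fin 2)) (j : Fin 2) : |z j - y j| ≤ dist z y := by
    simpa [Real.dist_eq] using PiLp.dist_apply_le z y j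
  refine le_antisymm ?_ ((le_infDist ⟨_, htooth⟩).2 fun y hy => ?_)
  · calc infDist z comb ≤ dist z (verticalLine (combMid i) (k * combWidth i)) :=
          infDist_le_dist_of_mem htooth
      _ = |t - k * combWidth i| := by rw [(isometry_verticalLine _).dist_eq, Real.dist_eq]
      _ = _ := (AddCircle.norm_eq _).symm
  have hhalf : ‖(t : AddCircle (combWidth i))‖ ≤ combWidth i / 2 := by
    simpa [abs_of_pos hw] using AddCircle.norm_le_half_period _ hw.ne' (x := t)
  by_cases hstrip : y 0 ∈ Ioo (combEdge i) (combEdge (i + 1))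
  · rcases exists_eq_intCast_mul_of_mem_comb hy hstrip with hfar | ⟨k', hk'⟩
    · calc _ ≤ combWidth i / 2 := hhalf
        _ ≤ |t - y 1| := by
          have := abs_sub_abs_le_abs_sub (y 1) t
          rw [abs_of_nonneg ht.1, abs_sub_comm] at this
          linarith [combWidth_le_one i, ht.2]
        _ ≤ dist z y := by simpa [z] using hcoord y 1
    · calc _ ≤ |t - k' * combWidth i| := AddCircle.norm_coe_le_abs_sub_intCast_mul _ _
        _ = |t - y 1| := by rw [hk']
        _ ≤ dist z y := by simpa [z] using hcoord y 1
  · calc _ ≤ combWidth i / 2 := hhalf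
      _ ≤ |combMid i - y 0| := by
          rw [abs_sub_comm]
          simpa [combMid, combEdge_succ] using half_sub_le_abs_sub_midpoint hstrip
      _ ≤ dist z y := by simpa [z] using hcoord y 0

theorem infDist_comb_comp_verticalLine_two : (infDist · comb) ∘ verticalLine 2 = 0 := by
  funext t
  exact infDist_zero_of_mem (Or.inl (by simp))

theorem ae_abs_deriv_infDist_comb_comp_verticalLine (i : ℕ) :
    ∀ᵐ t ∂volume.restrict (Icc (0 : ℝ) 1),
      |deriv ((infDist · comb) ∘ verticalLine (combMid i)) t| = 1 := by
  rw [← Measure.restrict_congr_set Ioo_ae_eq_Icc, ae_restrict_iff' measurableSet_Ioo]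
  filter_upwards [AddCircle.ae_abs_deriv_norm_coe (combWidth_pos i)] with t ht htI
  rw [← ht, Filter.EventuallyEq.deriv_eq]
  filter_upwards [Ioo_mem_nhds htI.1 htI.2] with s hs
  exact infDist_verticalLine_comb (Ioo_subset_Icc_self hs)

end

/-- **Theorem (discontinuity of the composition operator).** There is a compactly supported
Lipschitz function `φ : ℝ² → ℝ` such that for every `1 ≤ p < ∞` the composition operator
`u ↦ φ ∘ u` from `W^{1,p}([0,1], ℝ²)` to `W^{1,p}([0,1])` is not continuous: there are
Lipschitz curves `uᵢ → v` in `W^{1,p}([0,1], ℝ²)` for which `φ ∘ uᵢ` does not converge to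
`φ ∘ v` in `W^{1,p}([0,1])`. -/
theorem stmt_5 : ∃ φ : EuclideanSpace ℝ (Fin 2) → ℝ,
    (∃ L : NNReal, LipschitzWith L φ) ∧ HasCompactSupport φ ∧
    ∀ p : ENNReal, 1 ≤ p → p ≠ ⊤ →
      ∃ (u : ℕ → ℝ → EuclideanSpace ℝ (Fin 2)) (v : ℝ → EuclideanSpace ℝ (Fin 2)),
        (∀ i, ∃ K : NNReal, LipschitzWith K (u i)) ∧ (∃ K : NNReal, LipschitzWith K v) ∧
        Tendsto (fun i =>
            eLpNorm (fun x => u i x - v x) p (volume.restrict (Set.Icc (0:ℝ) 1)) +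
            eLpNorm (fun x => deriv (u i) x - deriv v x) p
              (volume.restrict (Set.Icc (0:ℝ) 1)))
          atTop (nhds 0) ∧
        ¬ Tendsto (fun i =>
            eLpNorm (fun x => φ (u i x) - φ (v x)) p (volume.restrict (Set.Icc (0:ℝ) 1)) +
            eLpNorm (fun x => deriv (φ ∘ u i) x - deriv (φ ∘ v) x) p
              (volume.restrict (Set.Icc (0:ℝ) 1)))
          atTop (nhds 0) := by
  have : IsProbabilityMeasure (volume.restrict (Icc (0 : ℝ) 1)) := ⟨by simp⟩
  refine ⟨(infDist · comb), ⟨1, lipschitz_infDist_pt _⟩, hasCompactSupport_infDist_comb,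
    fun p hp _ => ⟨fun i => verticalLine (combMid i), verticalLine 2,
      fun i => ⟨1, (isometry_verticalLine _).lipschitz⟩, ⟨1, (isometry_verticalLine _).lipschitz⟩,
      tendsto_sobolevDist_const_add (fun t => t • EuclideanSpace.single 1 1)
        (tendsto_combMid.smul_const _) p _, fun hlim => ?_⟩⟩
  have hone (i : ℕ) : 1 ≤ sobolevDist p (volume.restrict (Icc (0 : ℝ) 1))
      ((infDist · comb) ∘ verticalLine (combMid i)) ((infDist · comb) ∘ verticalLine 2) := by
    refine one_le_sobolevDist (zero_lt_one.trans_le hp).ne' ?_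
    filter_upwards [ae_abs_deriv_infDist_comb_comp_verticalLine i] with t ht
    simpa [infDist_comb_comp_verticalLine_two] using ht
  exact absurd (ge_of_tendsto' hlim hone) (by norm_num)
end

section
/- The length of the curve t ↦ (t, dist(t, S)) for t ∈ [1,2], where S = {1 + i·2^{−N} : i = 0, 1, …, 2^N} for a positive integer N, equals √2. -/
open Set Metric
open scoped ENNReal NNReal

/-!
Since `dist(·, S)` is 1-Lipschitz, the curve `t ↦ (t, dist(t, S))` is `√2`-Lipschitz, so its
length over an interval is at most `√2` times the interval's length. Conversely, with grid step `δ`,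
the distance to `S` alternates between `0` and `δ / 2` along the half-grid of step `δ / 2`, so each
of the chords between consecutive half-grid points has length exactly `√2 · δ / 2`.
-/

def gridSet (a δ : ℝ) (n : ℕ) : Set ℝ := {s : ℝ | ∃ i : ℕ, i ≤ n ∧ s = a + (i : ℝ) * δ}

def graphCurve (g : ℝ → ℝ) (t : ℝ) : EuclideanSpace ℝ (Fin 2) :=
  (WithLp.equiv 2 (Fin 2 → ℝ)).symm ![t, g t]

theorem dist_graphCurve (g : ℝ → ℝ) (s t : ℝ) :
    dist (graphCurve g s) (graphCurve g t) = √((s - t) ^ 2 + (g s - g t) ^ 2) := by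
  simp [graphCurve, EuclideanSpace.dist_eq, Fin.sum_univ_two, Real.dist_eq, sq_abs]

theorem lipschitzWith_graphCurve {g : ℝ → ℝ} {K : ℝ≥0} (hg : LipschitzWith K g) :
    LipschitzWith (NNReal.sqrt (1 + K ^ 2)) (graphCurve g) := by
  refine LipschitzWith.of_dist_le_mul fun s t => ?_
  have hgst : (g s - g t) ^ 2 ≤ K ^ 2 * (s - t) ^ 2 := by
    have := hg.dist_le_mul s t
    rw [Real.dist_eq, Real.dist_eq] at this
    calc (g s - g t) ^ 2 = |g s - g t| ^ 2 := (sq_abs _).symm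
      _ ≤ (K * |s - t|) ^ 2 := pow_le_pow_left₀ (abs_nonneg _) this 2
      _ = K ^ 2 * (s - t) ^ 2 := by rw [mul_pow, sq_abs]
  calc dist (graphCurve g s) (graphCurve g t) = √((s - t) ^ 2 + (g s - g t) ^ 2) :=
        dist_graphCurve g s t
    _ ≤ √((1 + K ^ 2) * (s - t) ^ 2) := Real.sqrt_le_sqrt (by linarith)
    _ = NNReal.sqrt (1 + K ^ 2) * dist s t := by
        rw [Real.sqrt_mul (by positivity), Real.sqrt_sq_eq_abs, Real.dist_eq]
        simp

theorem LipschitzOnWith.eVariationOn_Icc_le {E : Type*} [PseudoEMetricSpace E] {f : ℝ → E}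
    {C : ℝ≥0} {a b : ℝ} (hf : LipschitzOnWith C f (Icc a b)) :
    eVariationOn f (Icc a b) ≤ C * ENNReal.ofReal (b - a) := by
  simpa [eVariationOn_id_Icc] using hf.comp_eVariationOn_le (g := id) (mapsTo_id _)

theorem natCast_mul_le_eVariationOn_Icc {E : Type*} [PseudoEMetricSpace E] {f : ℝ → E}
    {a h : ℝ} {c : ℝ≥0∞} (hh : 0 ≤ h) (m : ℕ)
    (hc : ∀ i < m, c ≤ edist (f (a + (i + 1 : ℕ) * h)) (f (a + i * h))) :
    m * c ≤ eVariationOn f (Icc a (a + m * h)) := by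
  have hmono : MonotoneOn (fun i : ℕ => a + i * h) (Iic m) := fun i _ j _ hij => by
    have : (i : ℝ) ≤ j := by exact_mod_cast hij
    simp only; nlinarith
  have hmem : ∀ i ≤ m, a + i * h ∈ Icc a (a + m * h) := fun i hi => by
    have : (i : ℝ) ≤ m := by exact_mod_cast hi
    constructor <;> nlinarith [(i.cast_nonneg : (0 : ℝ) ≤ i)]
  calc (m : ℝ≥0∞) * c = ∑ _i ∈ Finset.range m, c := by simp
    _ ≤ ∑ i ∈ Finset.range m, edist (f (a + (i + 1 : ℕ) * h)) (f (a + i * h)) :=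
        Finset.sum_le_sum fun i hi => hc i (Finset.mem_range.mp hi)
    _ ≤ _ := eVariationOn.sum_le_of_monotoneOn_Iic hmono hmem

theorem infDist_gridSet_of_even {a δ : ℝ} {n j : ℕ} (hj : Even j) (hjn : j ≤ 2 * n) :
    infDist (a + j * (δ / 2)) (gridSet a δ n) = 0 := by
  obtain ⟨i, rfl⟩ := hj
  exact infDist_zero_of_mem ⟨i, by omega, by push_cast; ring⟩

theorem infDist_gridSet_of_odd {a δ : ℝ} (hδ : 0 ≤ δ) {n j : ℕ} (hj : Odd j)
    (hjn : j ≤ 2 * n) : infDist (a + j * (δ / 2)) (gridSet a δ n) = δ / 2 := by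
  obtain ⟨i, rfl⟩ := hj
  apply le_antisymm
  · calc infDist (a + (2 * i + 1 : ℕ) * (δ / 2)) (gridSet a δ n)
        ≤ dist (a + (2 * i + 1 : ℕ) * (δ / 2)) (a + i * δ) :=
          infDist_le_dist_of_mem ⟨i, by omega, rfl⟩
      _ = δ / 2 := by
          rw [Real.dist_eq, abs_of_nonneg] <;> push_cast <;> linarith
  · refine (le_infDist (s := gridSet a δ n) ⟨a, 0, by simp⟩).2 ?_
    rintro _ ⟨k, -, rfl⟩
    -- the grid points sit at even multiples of `δ / 2`, the point at an odd one
    have hodd : (1 : ℝ) ≤ |(2 * i + 1 : ℝ) - 2 * k| := by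
      have : (1 : ℤ) ≤ |(2 * i + 1 : ℤ) - 2 * k| := Int.one_le_abs (by omega)
      exact_mod_cast this
    calc δ / 2 = 1 * (δ / 2) := (one_mul _).symm
      _ ≤ |(2 * i + 1 : ℝ) - 2 * k| * (δ / 2) := by gcongr
      _ = |((2 * i + 1 : ℝ) - 2 * k) * (δ / 2)| := by
          rw [abs_mul, abs_of_nonneg (by linarith : 0 ≤ δ / 2)]
      _ = dist (a + (2 * i + 1 : ℕ) * (δ / 2)) (a + k * δ) := by
          rw [Real.dist_eq]; push_cast; ring_nf

theorem abs_infDist_gridSet_succ_sub {a δ : ℝ} (hδ : 0 ≤ δ) {n j : ℕ} (hj : j < 2 * n) :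
    |infDist (a + (j + 1 : ℕ) * (δ / 2)) (gridSet a δ n) -
      infDist (a + j * (δ / 2)) (gridSet a δ n)| = δ / 2 := by
  rcases Nat.even_or_odd j with he | ho
  · rw [infDist_gridSet_of_odd hδ he.add_one hj, infDist_gridSet_of_even he hj.le, sub_zero,
      abs_of_nonneg (by linarith)]
  · rw [infDist_gridSet_of_even ho.add_one hj, infDist_gridSet_of_odd hδ ho hj.le, zero_sub,
      abs_neg, abs_of_nonneg (by linarith)]

theorem eVariationOn_graphCurve_infDist_gridSet {a δ : ℝ} (hδ : 0 ≤ δ) (n : ℕ) :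
    eVariationOn (graphCurve (infDist · (gridSet a δ n))) (Icc a (a + n * δ)) =
      ENNReal.ofReal (√2 * (n * δ)) := by
  set F := graphCurve (infDist · (gridSet a δ n))
  apply le_antisymm
  · calc eVariationOn F (Icc a (a + n * δ))
        ≤ NNReal.sqrt (1 + 1 ^ 2) * ENNReal.ofReal (a + n * δ - a) :=
          (lipschitzWith_graphCurve (lipschitz_infDist_pt _)).lipschitzOnWith.eVariationOn_Icc_le
      _ = ENNReal.ofReal (√2 * (n * δ)) := by
          rw [← ENNReal.ofReal_coe_nnreal, ← ENNReal.ofReal_mul (by positivity)]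
          norm_num
  · have hstep : ∀ j < 2 * n, ENNReal.ofReal (√2 * (δ / 2)) ≤
        edist (F (a + (j + 1 : ℕ) * (δ / 2))) (F (a + j * (δ / 2))) := fun j hj => by
      have hfst : (a + (j + 1 : ℕ) * (δ / 2) - (a + j * (δ / 2))) ^ 2 = (δ / 2) ^ 2 := by
        push_cast; ring
      have hsnd := abs_infDist_gridSet_succ_sub (a := a) hδ hj
      rw [edist_dist, dist_graphCurve, ← sq_abs (infDist _ _ - _), hsnd, hfst, ← two_mul,
        Real.sqrt_mul zero_le_two, Real.sqrt_sq (by linarith)]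
    calc ENNReal.ofReal (√2 * (n * δ))
          = ((2 * n : ℕ) : ℝ≥0∞) * ENNReal.ofReal (√2 * (δ / 2)) := by
          rw [← ENNReal.ofReal_natCast, ← ENNReal.ofReal_mul (by positivity)]
          push_cast; ring_nf
      _ ≤ eVariationOn F (Icc a (a + (2 * n : ℕ) * (δ / 2))) :=
          natCast_mul_le_eVariationOn_Icc (by linarith) _ hstep
      _ = eVariationOn F (Icc a (a + n * δ)) := by push_cast; ring_nf

theorem stmt_16_general (N : ℕ) :
    eVariationOn
      (fun t : ℝ => (WithLp.equiv 2 (Fin 2 → ℝ)).symm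
        ![t, Metric.infDist t {s : ℝ | ∃ i : ℕ, i ≤ 2 ^ N ∧ s = 1 + (i : ℝ) * (2:ℝ) ^ (-(N:ℤ))}])
      (Set.Icc (1:ℝ) 2) = ENNReal.ofReal (Real.sqrt 2) := by
  have hlength : ((2 ^ N : ℕ) : ℝ) * (2 : ℝ) ^ (-(N : ℤ)) = 1 := by
    rw [zpow_neg, zpow_natCast]; push_cast; exact mul_inv_cancel₀ (by positivity)
  have := eVariationOn_graphCurve_infDist_gridSet (a := 1)
    (by positivity : (0 : ℝ) ≤ 2 ^ (-(N : ℤ))) (2 ^ N)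
  rw [hlength, one_add_one_eq_two, mul_one] at this
  exact this

/-- **Length of the sawtooth curve.** For `S = {1 + i·2^{-N} : 0 ≤ i ≤ 2^N}`, the curve
`t ↦ (t, dist(t,S))`, `t ∈ [1,2]`, has length (total variation) equal to `√2`. -/
theorem stmt_16 (N : ℕ) (hN : 1 ≤ N) :
    eVariationOn
      (fun t : ℝ => (WithLp.equiv 2 (Fin 2 → ℝ)).symm
        ![t, Metric.infDist t {s : ℝ | ∃ i : ℕ, i ≤ 2 ^ N ∧ s = 1 + (i : ℝ) * (2:ℝ) ^ (-(N:ℤ))}])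
      (Set.Icc (1:ℝ) 2) = ENNReal.ofReal (Real.sqrt 2) :=
  stmt_16_general N
end
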